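/- arXiv:2502.20718 — 2 statements merged into one kernel-verified Lean document; each statement's English description precedes it below -/
import Mathlib

section
/- Assume the system is 2s-eigenvalue observable (every eigenvalue λ_j is observable with respect to at least 2s+1 sensors) and the data Y_1,…,Y_p are generated under at most s attacks from x_true. Then for every subspace index j: (a) the true substate P_j x_true agrees with at least s+1 sensors in Obs_j; (b) every x_j ∈ V^j with x_j ≠ P_j x_true agrees with at most s sensors in Obs_j. Consequently, P_j x_true is the unique element of V^j receiving the strict majority of votes among the sensors in Obs_j. (Lemma 4, claim 4: correctness of majority voting.) -/
/-!
An honest sensor `i` for which `λ_j` is observable pins down the `V^j`-component. If two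
decompositions produce the same output on sensor `i` over `t + 1 ≥ n` steps, then by
Cayley–Hamilton the output of their difference `d` vanishes under every polynomial in `A`.
The `V^j`-component of `d` is itself a polynomial in `A` applied to `d` (Bézout for the coprime
factors `(X - λ_k)^n`), and if it were nonzero some `(A - λ_j)^m` would map it to an eigenvector
invisible to sensor `i`. Hence a wrong substate agrees only with attacked sensors, at most `s`
of them, while the at least `s + 1` honest observable sensors all agree with `P_j x_true`.
-/

open Matrix

noncomputable section

/-- Generalized eigenspace of `A` for the eigenvalue `μ`: `ker((A - μ I)^n)`. -/
def genEig {n : ℕ} (A : Matrix (Fin n) (Fin n) ℝ) (μ : ℝ) : Set (Fin n → ℝ) :=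
  {x | ((A - μ • 1) ^ n).mulVec x = 0}

/-- Observability map of sensor `i` over horizon `t`: `(𝒪_i x)_τ = C_i A^τ x`. -/
def obsMap {n p : ℕ} (t : ℕ) (A : Matrix (Fin n) (Fin n) ℝ)
    (C : Matrix (Fin p) (Fin n) ℝ) (i : Fin p) (x : Fin n → ℝ) : Fin (t + 1) → ℝ :=
  fun τ => ((C * A ^ (τ : ℕ)).mulVec x) i

/-- `x` is a plausible state for the data `Y`: some set `Γ` of `p - s` sensors is
exactly explained by `x`. -/
def plausible {n p : ℕ} (t : ℕ) (A : Matrix (Fin n) (Fin n) ℝ)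
    (C : Matrix (Fin p) (Fin n) ℝ) (s : ℕ) (Y : Fin p → Fin (t + 1) → ℝ)
    (x : Fin n → ℝ) : Prop :=
  ∃ Γ : Finset (Fin p), Γ.card = p - s ∧ ∀ i ∈ Γ, obsMap t A C i x = Y i

/-- The eigenvalue `μ` of `A` is observable with respect to sensor `i` (over `ℂ`). -/
def eigObs {n p : ℕ} (A : Matrix (Fin n) (Fin n) ℝ)
    (C : Matrix (Fin p) (Fin n) ℝ) (μ : ℝ) (i : Fin p) : Prop :=
  ∀ v : Fin n → ℂ, (A.map Complex.ofReal).mulVec v = (μ : ℂ) • v →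
    ((C.map Complex.ofReal).mulVec v) i = 0 → v = 0

/-- The substate `xj ∈ V^j` agrees with sensor `i`: some choice of substates in the
other generalized eigenspaces makes the total response match the data `Y i`. -/
def agrees {n p r : ℕ} (t : ℕ) (A : Matrix (Fin n) (Fin n) ℝ)
    (C : Matrix (Fin p) (Fin n) ℝ) (lam : Fin r → ℝ)
    (Y : Fin p → Fin (t + 1) → ℝ) (j : Fin r) (xj : Fin n → ℝ) (i : Fin p) : Prop :=
  ∃ z : Fin r → Fin n → ℝ, (∀ k, k ≠ j → z k ∈ genEig A (lam k)) ∧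
    obsMap t A C i (xj + ∑ k ∈ Finset.univ.erase j, z k) = Y i

/-- `X_j`: the substates in `V^j` that agree with at least `q + 1 - s` sensors for
which `λ_j` is observable. -/
def Xset {n p r : ℕ} (t : ℕ) (A : Matrix (Fin n) (Fin n) ℝ)
    (C : Matrix (Fin p) (Fin n) ℝ) (lam : Fin r → ℝ)
    (Y : Fin p → Fin (t + 1) → ℝ) (s q : ℕ) (j : Fin r) : Set (Fin n → ℝ) :=
  {xj | xj ∈ genEig A (lam j) ∧
    q + 1 - s ≤ {i : Fin p | eigObs A C (lam j) i ∧ agrees t A C lam Y j xj i}.ncard}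

/-- `I_j(xj)`: the sensors that do not agree with the substate `xj`. -/
def Iset {n p r : ℕ} (t : ℕ) (A : Matrix (Fin n) (Fin n) ℝ)
    (C : Matrix (Fin p) (Fin n) ℝ) (lam : Fin r → ℝ)
    (Y : Fin p → Fin (t + 1) → ℝ) (j : Fin r) (xj : Fin n → ℝ) : Set (Fin p) :=
  {i | ¬ agrees t A C lam Y j xj i}

open Polynomial

section Aeval

variable {R ι : Type*} [CommRing R] [Fintype ι] [DecidableEq ι]

/-- By Cayley–Hamilton, every `aeval A q` is a combination of `A ^ m` with `m < card ι`. -/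
theorem dotProduct_aeval_mulVec_eq_zero [Nontrivial R] {A : Matrix ι ι R} {c d : ι → R}
    (h : ∀ m < Fintype.card ι, c ⬝ᵥ (A ^ m *ᵥ d) = 0) (q : R[X]) :
    c ⬝ᵥ (aeval A q *ᵥ d) = 0 := by
  cases isEmpty_or_nonempty ι
  · simp [dotProduct]
  have hdeg : (q %ₘ A.charpoly).natDegree < Fintype.card ι := by
    rw [← A.charpoly_natDegree_eq_dim]
    refine natDegree_modByMonic_lt q A.charpoly_monic fun h1 => Fintype.card_ne_zero (α := ι) ?_
    simpa [h1] using A.charpoly_natDegree_eq_dim.symm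
  rw [A.aeval_eq_aeval_mod_charpoly, aeval_eq_sum_range' hdeg, Matrix.sum_mulVec,
    dotProduct_sum]
  refine Finset.sum_eq_zero fun m hm => ?_
  rw [Matrix.smul_mulVec, dotProduct_smul, h m (Finset.mem_range.1 hm), smul_zero]

theorem aeval_X_sub_C_pow (A : Matrix ι ι R) (μ : R) (m : ℕ) :
    aeval A ((X - C μ) ^ m) = (A - μ • 1) ^ m := by
  rw [map_pow, map_sub, aeval_X, aeval_C, Algebra.algebraMap_eq_smul_one]

theorem aeval_mulVec_eq_zero_of_dvd {A : Matrix ι ι R} {μ : R} {m : ℕ} {v : ι → R}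
    (hv : (A - μ • 1) ^ m *ᵥ v = 0) {q : R[X]} (hq : (X - C μ) ^ m ∣ q) :
    aeval A q *ᵥ v = 0 := by
  obtain ⟨r, rfl⟩ := hq
  rw [mul_comm, map_mul, ← Matrix.mulVec_mulVec, aeval_X_sub_C_pow, hv, Matrix.mulVec_zero]

end Aeval

/-- Take `q = b Q` from a Bézout identity `a (X - λⱼ)ᵐ + b Q = 1`,
where `Q = ∏_{k ≠ j} (X - λₖ)ᵐ`. -/
theorem exists_aeval_mulVec_sum_eq {K ι κ : Type*} [Field K] [Fintype ι] [DecidableEq ι]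
    [Fintype κ] [DecidableEq κ] {A : Matrix ι ι K} {lam : κ → K}
    (hlam : Function.Injective lam) {m : ℕ} {e : κ → ι → K}
    (he : ∀ k, (A - lam k • 1) ^ m *ᵥ e k = 0) (j : κ) :
    ∃ q : K[X], aeval A q *ᵥ ∑ k, e k = e j := by
  set Q : K[X] := ∏ k ∈ Finset.univ.erase j, (X - C (lam k)) ^ m
  have hcop : IsCoprime ((X - C (lam j)) ^ m) Q :=
    IsCoprime.prod_right fun k hk =>
      (pairwise_coprime_X_sub_C hlam (Finset.ne_of_mem_erase hk).symm).pow
  obtain ⟨a, b, hab⟩ := hcop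
  refine ⟨b * Q, ?_⟩
  rw [Matrix.mulVec_sum, Finset.sum_eq_single j]
  · rw [← add_sub_cancel_left (a * (X - C (lam j)) ^ m) (b * Q), hab, map_sub, map_one,
      Matrix.sub_mulVec, Matrix.one_mulVec,
      aeval_mulVec_eq_zero_of_dvd (he j) (dvd_mul_left _ _), sub_zero]
  · intro k _ hk
    exact aeval_mulVec_eq_zero_of_dvd (he k) <| (Finset.dvd_prod_of_mem _ <|
      Finset.mem_erase.2 ⟨hk, Finset.mem_univ k⟩).mul_left b
  · exact fun hj => (hj (Finset.mem_univ j)).elim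

theorem Matrix.exists_pow_mulVec_ne_zero_and_mulVec_eq_zero {R ι : Type*} [Semiring R]
    [Fintype ι] [DecidableEq ι] (N : Matrix ι ι R) {m : ℕ} {u : ι → R} (hu : u ≠ 0)
    (hm : N ^ m *ᵥ u = 0) :
    ∃ k : ℕ, N ^ k *ᵥ u ≠ 0 ∧ N *ᵥ (N ^ k *ᵥ u) = 0 := by
  induction m generalizing u with
  | zero => exact absurd (by simpa using hm) hu
  | succ m ih =>
    by_cases hNu : N *ᵥ u = 0
    · exact ⟨0, by simpa using hu, by simpa using hNu⟩
    · rw [pow_succ, ← Matrix.mulVec_mulVec] at hm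
      obtain ⟨k, hk, hk0⟩ := ih hNu hm
      refine ⟨k + 1, ?_, ?_⟩ <;> rwa [pow_succ, ← Matrix.mulVec_mulVec]

section Observability

variable {n p r t : ℕ} {A : Matrix (Fin n) (Fin n) ℝ} {C : Matrix (Fin p) (Fin n) ℝ}

theorem sub_mem_genEig {μ : ℝ} {x y : Fin n → ℝ} (hx : x ∈ genEig A μ)
    (hy : y ∈ genEig A μ) : x - y ∈ genEig A μ := by
  change _ *ᵥ _ = 0 at hx hy ⊢
  rw [Matrix.mulVec_sub, hx, hy, sub_zero]

theorem obsMap_sub (i : Fin p) (x y : Fin n → ℝ) :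
    obsMap t A C i (x - y) = obsMap t A C i x - obsMap t A C i y := by
  funext τ
  simp [obsMap, Matrix.mulVec_sub]

theorem eigObs.eq_zero_of_mulVec_eq_smul {μ : ℝ} {i : Fin p} (hobs : eigObs A C μ i)
    {w : Fin n → ℝ} (hw : A *ᵥ w = μ • w) (hCw : (C *ᵥ w) i = 0) : w = 0 := by
  have hmap : ∀ {q : ℕ} (M : Matrix (Fin q) (Fin n) ℝ) (i : Fin q),
      (M.map Complex.ofReal *ᵥ (Complex.ofReal ∘ w)) i = ((M *ᵥ w) i : ℂ) :=
    fun M i => (RingHom.map_mulVec Complex.ofRealHom M w i).symm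
  have hc := hobs (Complex.ofReal ∘ w) ?_ ?_
  · funext x
    simpa using congrFun hc x
  · funext x
    rw [hmap, hw]
    simp
  · rw [hmap, hCw, Complex.ofReal_zero]

theorem eigObs.eq_zero_of_mem_genEig {μ : ℝ} {i : Fin p} (hobs : eigObs A C μ i)
    {u : Fin n → ℝ} (hu : u ∈ genEig A μ)
    (hC : ∀ m, (C *ᵥ ((A - μ • 1) ^ m *ᵥ u)) i = 0) : u = 0 := by
  by_contra hu0
  obtain ⟨k, hk, hk0⟩ := (A - μ • 1).exists_pow_mulVec_ne_zero_and_mulVec_eq_zero hu0 hu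
  refine hk (hobs.eq_zero_of_mulVec_eq_smul ?_ (hC k))
  rwa [Matrix.sub_mulVec, Matrix.smul_mulVec, Matrix.one_mulVec, sub_eq_zero] at hk0

theorem eigObs.eq_zero_of_obsMap_sum_eq_zero {lam : Fin r → ℝ} (hlam : Function.Injective lam)
    (ht : n - 1 ≤ t) {j : Fin r} {i : Fin p} (hobs : eigObs A C (lam j) i)
    {e : Fin r → Fin n → ℝ} (he : ∀ k, e k ∈ genEig A (lam k))
    (h0 : obsMap t A C i (∑ k, e k) = 0) : e j = 0 := by
  have hpow : ∀ m < Fintype.card (Fin n), C i ⬝ᵥ (A ^ m *ᵥ ∑ k, e k) = 0 := by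
    intro m hm
    have := congrFun h0 ⟨m, by rw [Fintype.card_fin] at hm; omega⟩
    rwa [obsMap, ← Matrix.mulVec_mulVec] at this
  obtain ⟨q, hq⟩ := exists_aeval_mulVec_sum_eq hlam he j
  refine hobs.eq_zero_of_mem_genEig (he j) fun m => ?_
  change C i ⬝ᵥ _ = 0
  rw [← hq, ← aeval_X_sub_C_pow, Matrix.mulVec_mulVec, ← map_mul]
  exact dotProduct_aeval_mulVec_eq_zero hpow _

theorem proj_add_sum_erase_proj {P : Fin r → Matrix (Fin n) (Fin n) ℝ}
    (hPsum : ∀ x : Fin n → ℝ, ∑ j, P j *ᵥ x = x) (j : Fin r) (x : Fin n → ℝ) :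
    P j *ᵥ x + ∑ k ∈ Finset.univ.erase j, P k *ᵥ x = x :=
  (Finset.add_sum_erase _ (fun k => P k *ᵥ x) (Finset.mem_univ j)).trans (hPsum x)

theorem agrees_proj {lam : Fin r → ℝ} {P : Fin r → Matrix (Fin n) (Fin n) ℝ}
    (hPmem : ∀ j, ∀ x : Fin n → ℝ, P j *ᵥ x ∈ genEig A (lam j))
    (hPsum : ∀ x : Fin n → ℝ, ∑ j, P j *ᵥ x = x) {Y : Fin p → Fin (t + 1) → ℝ}
    {x : Fin n → ℝ} {i : Fin p} (hi : Y i = obsMap t A C i x) (j : Fin r) :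
    agrees t A C lam Y j (P j *ᵥ x) i :=
  ⟨fun k => P k *ᵥ x, fun k _ => hPmem k x, by rw [proj_add_sum_erase_proj hPsum, hi]⟩

theorem eigObs.eq_proj_of_agrees {lam : Fin r → ℝ} (hlam : Function.Injective lam)
    (ht : n - 1 ≤ t) {P : Fin r → Matrix (Fin n) (Fin n) ℝ}
    (hPmem : ∀ j, ∀ x : Fin n → ℝ, P j *ᵥ x ∈ genEig A (lam j))
    (hPsum : ∀ x : Fin n → ℝ, ∑ j, P j *ᵥ x = x) {Y : Fin p → Fin (t + 1) → ℝ}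
    {x : Fin n → ℝ} {i : Fin p} (hi : Y i = obsMap t A C i x) {j : Fin r}
    (hobs : eigObs A C (lam j) i) {xj : Fin n → ℝ} (hxj : xj ∈ genEig A (lam j))
    (hag : agrees t A C lam Y j xj i) : xj = P j *ᵥ x := by
  obtain ⟨z, hz, hzY⟩ := hag
  set e : Fin r → Fin n → ℝ := fun k => Function.update z j xj k - P k *ᵥ x with he
  have hemem : ∀ k, e k ∈ genEig A (lam k) := by
    intro k
    rcases eq_or_ne k j with rfl | hk
    · simpa [he] using sub_mem_genEig hxj (hPmem k x)
    · simpa [he, hk] using sub_mem_genEig (hz k hk) (hPmem k x)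
  have hsum : ∑ k, e k = (xj + ∑ k ∈ Finset.univ.erase j, z k) - x := by
    rw [Finset.sum_sub_distrib, Finset.sum_update_of_mem (Finset.mem_univ j), hPsum,
      Finset.sdiff_singleton_eq_erase]
  have h0 : obsMap t A C i (∑ k, e k) = 0 := by
    rw [hsum, obsMap_sub, hzY, hi, sub_self]
  simpa [he, sub_eq_zero] using hobs.eq_zero_of_obsMap_sum_eq_zero hlam ht hemem h0

end Observability

theorem Set.add_one_le_ncard_sdiff_finset {α : Type*} {T : Set α} {Λ : Finset α} {s : ℕ}
    (hT : 2 * s + 1 ≤ T.ncard) (hΛ : Λ.card ≤ s) : s + 1 ≤ (T \ Λ).ncard := by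
  have := Set.le_ncard_sdiff (Λ : Set α) T
  rw [Set.ncard_coe_finset] at this
  omega

theorem majority_voting_correct_general
    {n p r s t : ℕ} (ht : n - 1 ≤ t)
    (A : Matrix (Fin n) (Fin n) ℝ) (C : Matrix (Fin p) (Fin n) ℝ)
    (lam : Fin r → ℝ) (hlam : Function.Injective lam)
    (P : Fin r → Matrix (Fin n) (Fin n) ℝ)
    (hPmem : ∀ j, ∀ x : Fin n → ℝ, (P j).mulVec x ∈ genEig A (lam j))
    (hPsum : ∀ x : Fin n → ℝ, ∑ j, (P j).mulVec x = x)
    (Y : Fin p → Fin (t + 1) → ℝ) (xtrue : Fin n → ℝ)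
    (ΛA : Finset (Fin p)) (hΛA : ΛA.card ≤ s)
    (hdata : ∀ i ∉ ΛA, Y i = obsMap t A C i xtrue)
    (h2sobs : ∀ j, 2 * s + 1 ≤ {i : Fin p | eigObs A C (lam j) i}.ncard) :
    ∀ j : Fin r,
      (s + 1 ≤ {i : Fin p | eigObs A C (lam j) i ∧
          agrees t A C lam Y j ((P j).mulVec xtrue) i}.ncard) ∧
      (∀ xj ∈ genEig A (lam j), xj ≠ (P j).mulVec xtrue →
        {i : Fin p | eigObs A C (lam j) i ∧ agrees t A C lam Y j xj i}.ncard ≤ s) ∧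
      (∀ xj ∈ genEig A (lam j),
        s + 1 ≤ {i : Fin p | eigObs A C (lam j) i ∧ agrees t A C lam Y j xj i}.ncard →
        xj = (P j).mulVec xtrue) := by
  intro j
  have honest_agree : {i | eigObs A C (lam j) i} \ ΛA ⊆
      {i | eigObs A C (lam j) i ∧ agrees t A C lam Y j ((P j).mulVec xtrue) i} :=
    fun i ⟨hobs, hi⟩ => ⟨hobs, agrees_proj hPmem hPsum (hdata i hi) j⟩
  have only_attacked_agree : ∀ xj ∈ genEig A (lam j), xj ≠ (P j).mulVec xtrue →
      {i | eigObs A C (lam j) i ∧ agrees t A C lam Y j xj i} ⊆ ΛA :=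
    fun xj hxj hne i ⟨hobs, hag⟩ => by_contra fun hi =>
      hne (hobs.eq_proj_of_agrees hlam ht hPmem hPsum (hdata i hi) hxj hag)
  have minority : ∀ xj ∈ genEig A (lam j), xj ≠ (P j).mulVec xtrue →
      {i | eigObs A C (lam j) i ∧ agrees t A C lam Y j xj i}.ncard ≤ s := fun xj hxj hne =>
    (Set.ncard_le_ncard (only_attacked_agree xj hxj hne)).trans
      ((Set.ncard_coe_finset ΛA).trans_le hΛA)
  refine ⟨?_, minority, fun xj hxj hmaj => by_contra fun hne => ?_⟩
  · exact (Set.add_one_le_ncard_sdiff_finset (h2sobs j) hΛA).trans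
      (Set.ncard_le_ncard honest_agree)
  · exact (minority xj hxj hne).not_gt hmaj

/-- Lemma 4, claim 4: correctness of majority voting under
`2s`-eigenvalue observability. -/
theorem majority_voting_correct
    {n p r s t : ℕ} (hsp : s ≤ p) (ht : n - 1 ≤ t)
    (A : Matrix (Fin n) (Fin n) ℝ) (C : Matrix (Fin p) (Fin n) ℝ)
    (lam : Fin r → ℝ) (hlam : Function.Injective lam)
    (heig : ∀ j, ∃ w : Fin n → ℝ, w ≠ 0 ∧ A.mulVec w = lam j • w)
    (P : Fin r → Matrix (Fin n) (Fin n) ℝ)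
    (hPmem : ∀ j, ∀ x : Fin n → ℝ, (P j).mulVec x ∈ genEig A (lam j))
    (hPsum : ∀ x : Fin n → ℝ, ∑ j, (P j).mulVec x = x)
    (Y : Fin p → Fin (t + 1) → ℝ) (xtrue : Fin n → ℝ)
    (ΛA : Finset (Fin p)) (hΛA : ΛA.card ≤ s)
    (hdata : ∀ i ∉ ΛA, Y i = obsMap t A C i xtrue)
    (h2sobs : ∀ j, 2 * s + 1 ≤ {i : Fin p | eigObs A C (lam j) i}.ncard) :
    ∀ j : Fin r,
      (s + 1 ≤ {i : Fin p | eigObs A C (lam j) i ∧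
          agrees t A C lam Y j ((P j).mulVec xtrue) i}.ncard) ∧
      (∀ xj ∈ genEig A (lam j), xj ≠ (P j).mulVec xtrue →
        {i : Fin p | eigObs A C (lam j) i ∧ agrees t A C lam Y j xj i}.ncard ≤ s) ∧
      (∀ xj ∈ genEig A (lam j),
        s + 1 ≤ {i : Fin p | eigObs A C (lam j) i ∧ agrees t A C lam Y j xj i}.ncard →
        xj = (P j).mulVec xtrue) :=
  majority_voting_correct_general ht A C lam hlam P hPmem hPsum Y xtrue ΛA hΛA hdata h2sobs
end
end

section
/- Assume the system is q-eigenvalue observable with s ≤ q ≤ 2s, and the data Y_1,…,Y_p are generated under at most s attacks from some x_true. Then: (a) each X_j is a nonempty finite set; (b) for every plausible state x and every j, P_j x ∈ X_j; (c) for every row vector κ ∈ ℝ^{1×n} and every plausible state x, κ x ≤ Σ_{j=1}^r max_{x_j ∈ X_j} κ x_j. In particular, the per-subspace maxima furnish an upper bound on max over plausible states of κ x. (Proposition 2: the decomposition-based bound overestimates the exact CBF bound M(Y).) -/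
/-!
Sensor `i` is blind exactly to its unobservable subspace `{x | ∀ τ, C_i A^τ x = 0}`; by
Cayley–Hamilton the outputs for `τ < n` already determine it, so the horizon `t ≥ n - 1` sees
everything. This subspace is `A`-invariant, so it splits along the generalized eigenspaces, and it
contains no eigenvector of an eigenvalue that sensor `i` observes. Hence two substates of `V^j`
agreeing with the same sensor of `Obs_j` coincide, so `X_j` has at most `|Obs_j|` elements.
A state matching every sensor outside a set of at most `s` sensors still agrees, after projection
to `V^j`, with `q + 1 - s` sensors of `Obs_j`; this puts `P_j x_true` and `P_j x`, for `x`
plausible, into `X_j`, and the bound follows from `κ x = ∑ⱼ κ (P_j x)`.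
-/

open Matrix

noncomputable section

theorem Set.sub_le_ncard_of_diff_subset {α : Type*} [Finite α] {S T U : Set α} {a b : ℕ}
    (hS : a ≤ S.ncard) (hT : T.ncard ≤ b) (h : S \ T ⊆ U) : a - b ≤ U.ncard :=
  calc a - b ≤ S.ncard - T.ncard := by omega
    _ ≤ (S \ T).ncard := Set.le_ncard_sdiff T S
    _ ≤ U.ncard := Set.ncard_le_ncard h

namespace Submodule

variable {R M : Type*} [CommRing R] [AddCommGroup M] [Module R M]

theorem disjoint_genEigenspace_of_mapsTo {f : Module.End R M} {N : Submodule R M}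
    (hN : ∀ x ∈ N, f x ∈ N) {μ : R} (hμ : ∀ w ∈ N, f w = μ • w → w = 0) (k : ℕ∞) :
    Disjoint N (f.genEigenspace μ k) := by
  rw [Submodule.disjoint_def]
  intro v hvN hv
  by_contra hv0
  have hgen : Module.End.HasUnifEigenvalue (f.restrict hN) μ k := by
    rw [Module.End.HasUnifEigenvalue, Submodule.ne_bot_iff]
    refine ⟨⟨v, hvN⟩, ?_, fun h => hv0 (congrArg Subtype.val h)⟩
    rwa [Module.End.genEigenspace_restrict, Submodule.mem_comap]
  obtain ⟨w, hw⟩ := Module.End.HasEigenvalue.exists_hasEigenvector (hgen.lt zero_lt_one)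
  refine hw.2 (Subtype.ext (hμ w w.2 ?_))
  simpa using congrArg Subtype.val (Module.End.mem_eigenspace_iff.1 hw.1)

end Submodule

namespace Module.End

variable {K V ι : Type*} [Field K] [AddCommGroup V] [Module K V] [FiniteDimensional K V]
  [Fintype ι] [DecidableEq ι]

theorem eq_zero_of_add_sum_mem {f : Module.End K V} {N : Submodule K V}
    (hN : ∀ x ∈ N, f x ∈ N) {μ : ι → K} (hμ : Function.Injective μ) {j : ι}
    (hj : Disjoint N (f.maxGenEigenspace (μ j)))
    {x : V} (hx : x ∈ f.maxGenEigenspace (μ j))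
    {z : ι → V} (hz : ∀ k, k ≠ j → z k ∈ f.maxGenEigenspace (μ k))
    (hsum : x + ∑ k ∈ Finset.univ.erase j, z k ∈ N) : x = 0 := by
  -- `N` splits along the generalized eigenspaces and its `μ j`-part is trivial, so both `N` and
  -- the `z k` lie in the sum `W` of the other generalized eigenspaces.
  set W := ⨆ ν, ⨆ (_ : ν ≠ μ j), f.maxGenEigenspace ν
  have hzW : ∑ k ∈ Finset.univ.erase j, z k ∈ W := by
    refine Submodule.sum_mem _ fun k hk => ?_
    have hkj := Finset.ne_of_mem_erase hk
    exact (le_iSup₂ (f := fun ν (_ : ν ≠ μ j) => f.maxGenEigenspace ν) (μ k)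
      (hμ.ne hkj)) (hz k hkj)
  have hNW : N ⊓ ⨆ ν, f.maxGenEigenspace ν ≤ W := by
    rw [Submodule.inf_iSup_genEigenspace hN]
    refine iSup_le fun ν => ?_
    by_cases hν : ν = μ j
    · simp [hν, hj.eq_bot]
    · exact inf_le_right.trans (le_iSup₂_of_le ν hν le_rfl)
  have hxW : x ∈ W := by
    have hsumW : x + ∑ k ∈ Finset.univ.erase j, z k ∈ W :=
      hNW ⟨hsum, Submodule.add_mem _ (Submodule.mem_iSup_of_mem (μ j) hx)
        (Submodule.sum_mem _ fun k hk =>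
          Submodule.mem_iSup_of_mem (μ k) (hz k (Finset.ne_of_mem_erase hk)))⟩
    simpa using W.sub_mem hsumW hzW
  exact (Submodule.disjoint_def.1 (f.independent_genEigenspace ⊤ (μ j))) x hx hxW

end Module.End

namespace Matrix

variable {R m n : Type*} [CommRing R] [Fintype n] [DecidableEq n]

theorem pow_mem_of_forall_lt_card [Nontrivial R] {A : Matrix n n R}
    {S : Submodule R (Matrix n n R)} (h : ∀ k < Fintype.card n, A ^ k ∈ S) (τ : ℕ) : A ^ τ ∈ S := by
  cases isEmpty_or_nonempty n
  · simp [Subsingleton.elim (A ^ τ) 0]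
  have hdeg : (Polynomial.X ^ τ %ₘ A.charpoly).natDegree < Fintype.card n := by
    rw [← A.charpoly_natDegree_eq_dim]
    refine Polynomial.natDegree_modByMonic_lt _ A.charpoly_monic fun h1 => ?_
    simpa [h1, eq_comm] using A.charpoly_natDegree_eq_dim
  rw [A.pow_eq_aeval_mod_charpoly, Polynomial.aeval_eq_sum_range' hdeg]
  exact S.sum_mem fun k hk => S.smul_mem _ (h k (Finset.mem_range.1 hk))

def unobservableSubspace (A : Matrix n n R) (C : Matrix m n R) (i : m) :
    Submodule R (n → R) where
  carrier := {v | ∀ τ : ℕ, ((C * A ^ τ) *ᵥ v) i = 0}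
  add_mem' hv hw τ := by simp [mulVec_add, hv τ, hw τ]
  zero_mem' τ := by simp
  smul_mem' c v hv τ := by simp [mulVec_smul, hv τ]

variable {A : Matrix n n R} {C : Matrix m n R} {i : m}

theorem toLin'_mem_unobservableSubspace {v : n → R} (hv : v ∈ unobservableSubspace A C i) :
    toLin' A v ∈ unobservableSubspace A C i := fun τ => by
  rw [toLin'_apply, mulVec_mulVec, Matrix.mul_assoc, ← pow_succ]
  exact hv (τ + 1)

theorem mem_unobservableSubspace_of_forall_lt_card [Nontrivial R] {v : n → R}
    (h : ∀ τ < Fintype.card n, ((C * A ^ τ) *ᵥ v) i = 0) : v ∈ unobservableSubspace A C i := by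
  let S : Submodule R (Matrix n n R) :=
    { carrier := {M | ((C * M) *ᵥ v) i = 0}
      add_mem' := fun hM hN => by simp_all [Matrix.mul_add, add_mulVec]
      zero_mem' := by simp
      smul_mem' := fun c M hM => by simp_all [smul_mulVec] }
  exact fun τ => pow_mem_of_forall_lt_card (S := S) h τ

end Matrix

section SensorSystem

variable {n p r s q t : ℕ} {A : Matrix (Fin n) (Fin n) ℝ} {C : Matrix (Fin p) (Fin n) ℝ}
  {lam : Fin r → ℝ} {Y : Fin p → Fin (t + 1) → ℝ} {P : Fin r → Matrix (Fin n) (Fin n) ℝ}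

theorem obsMap_sub_mem_unobservableSubspace (ht : n - 1 ≤ t) {i : Fin p} {x y : Fin n → ℝ}
    (h : obsMap t A C i x = obsMap t A C i y) : x - y ∈ unobservableSubspace A C i := by
  refine mem_unobservableSubspace_of_forall_lt_card fun τ hτ => ?_
  rw [Fintype.card_fin] at hτ
  have hxy := congrFun h ⟨τ, by omega⟩
  simp only [obsMap] at hxy
  rw [mulVec_sub, Pi.sub_apply, hxy, sub_self]

theorem eigObs.eq_zero {μ : ℝ} {i : Fin p} (hobs : eigObs A C μ i) {w : Fin n → ℝ}
    (hAw : A *ᵥ w = μ • w) (hCw : (C *ᵥ w) i = 0) : w = 0 := by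
  have hmap {m : Type} (M : Matrix m (Fin n) ℝ) (k : m) :
      (M.map Complex.ofReal *ᵥ Complex.ofReal ∘ w) k = ((M *ᵥ w) k : ℂ) :=
    (RingHom.map_mulVec Complex.ofRealHom M w k).symm
  have hcomplex := hobs (Complex.ofReal ∘ w) (funext fun k => by simp [hmap, hAw])
    (by rw [hmap, hCw, Complex.ofReal_zero])
  exact funext fun k => by simpa using congrFun hcomplex k

theorem eigObs.disjoint_unobservableSubspace {μ : ℝ} {i : Fin p} (hobs : eigObs A C μ i)
    (k : ℕ∞) :
    Disjoint (unobservableSubspace A C i) (Module.End.genEigenspace (toLin' A) μ k) :=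
  Submodule.disjoint_genEigenspace_of_mapsTo (fun _ hv => toLin'_mem_unobservableSubspace hv)
    (fun w hw hAw => hobs.eq_zero hAw (by simpa using hw 0)) k

theorem genEig_subset_maxGenEigenspace (A : Matrix (Fin n) (Fin n) ℝ) (μ : ℝ) :
    genEig A μ ⊆ Module.End.maxGenEigenspace (toLin' A) μ := fun x hx => by
  refine Module.End.genEigenspace_le_maximal _ μ n (Module.End.mem_genEigenspace_nat.2 ?_)
  have hlin : toLin' (A - μ • 1) = toLin' A - μ • 1 := by
    rw [map_sub, map_smul, toLin'_one, Module.End.one_eq_id]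
  rwa [LinearMap.mem_ker, ← hlin, ← toLin'_pow, toLin'_apply]

theorem eq_of_agrees (ht : n - 1 ≤ t) (hlam : Function.Injective lam)
    {j : Fin r} {i : Fin p} (hobs : eigObs A C (lam j) i)
    {x₁ x₂ : Fin n → ℝ} (hx₁ : x₁ ∈ genEig A (lam j)) (hx₂ : x₂ ∈ genEig A (lam j))
    (h₁ : agrees t A C lam Y j x₁ i) (h₂ : agrees t A C lam Y j x₂ i) : x₁ = x₂ := by
  obtain ⟨z₁, hz₁, hY₁⟩ := h₁
  obtain ⟨z₂, hz₂, hY₂⟩ := h₂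
  have hsum : x₁ - x₂ + ∑ k ∈ Finset.univ.erase j, (z₁ k - z₂ k) ∈
      unobservableSubspace A C i := by
    convert obsMap_sub_mem_unobservableSubspace ht (hY₁.trans hY₂.symm) using 1
    rw [Finset.sum_sub_distrib]
    abel
  refine sub_eq_zero.1 (Module.End.eq_zero_of_add_sum_mem
    (fun _ hv => toLin'_mem_unobservableSubspace hv) hlam
    (hobs.disjoint_unobservableSubspace ⊤) ?_ (fun k hk => ?_) hsum)
  · exact sub_mem (genEig_subset_maxGenEigenspace _ _ hx₁)
      (genEig_subset_maxGenEigenspace _ _ hx₂)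
  · exact sub_mem (genEig_subset_maxGenEigenspace _ _ (hz₁ k hk))
      (genEig_subset_maxGenEigenspace _ _ (hz₂ k hk))

theorem Xset_finite (hsq : s ≤ q) (ht : n - 1 ≤ t) (hlam : Function.Injective lam)
    {j : Fin r} : (Xset t A C lam Y s q j).Finite := by
  have hsub (i : Fin p) : {xj | xj ∈ genEig A (lam j) ∧ eigObs A C (lam j) i ∧
      agrees t A C lam Y j xj i}.Subsingleton :=
    fun _ h₁ _ h₂ => eq_of_agrees ht hlam h₁.2.1 h₁.1 h₂.1 h₁.2.2 h₂.2.2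
  refine (Set.finite_iUnion fun i => (hsub i).finite).subset fun xj ⟨hxj, hcard⟩ => ?_
  obtain ⟨i, hobs, hagr⟩ := Set.nonempty_of_ncard_ne_zero
    ((Nat.sub_pos_of_lt (Nat.lt_succ_of_le hsq)).trans_le hcard).ne'
  exact Set.mem_iUnion.2 ⟨i, hxj, hobs, hagr⟩

theorem agrees_of_obsMap_eq (hPmem : ∀ j, ∀ x : Fin n → ℝ, (P j).mulVec x ∈ genEig A (lam j))
    (hPsum : ∀ x : Fin n → ℝ, ∑ j, (P j).mulVec x = x)
    {i : Fin p} {x : Fin n → ℝ} (hx : obsMap t A C i x = Y i) (j : Fin r) :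
    agrees t A C lam Y j (P j *ᵥ x) i :=
  ⟨fun k => P k *ᵥ x, fun k _ => hPmem k x, by
    rwa [Finset.add_sum_erase _ (fun k => P k *ᵥ x) (Finset.mem_univ j), hPsum]⟩

theorem mulVec_mem_Xset (hPmem : ∀ j, ∀ x : Fin n → ℝ, (P j).mulVec x ∈ genEig A (lam j))
    (hPsum : ∀ x : Fin n → ℝ, ∑ j, (P j).mulVec x = x) {j : Fin r}
    (hqobs : q + 1 ≤ {i : Fin p | eigObs A C (lam j) i}.ncard)
    {T : Finset (Fin p)} (hT : T.card ≤ s) {x : Fin n → ℝ}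
    (hx : ∀ i ∉ T, obsMap t A C i x = Y i) : P j *ᵥ x ∈ Xset t A C lam Y s q j :=
  ⟨hPmem j x, Set.sub_le_ncard_of_diff_subset hqobs (by rwa [Set.ncard_coe_finset])
    fun i ⟨hobs, hiT⟩ => ⟨hobs, agrees_of_obsMap_eq hPmem hPsum (hx i hiT) j⟩⟩

theorem plausible.exists_card_le {x : Fin n → ℝ} (hx : plausible t A C s Y x) :
    ∃ T : Finset (Fin p), T.card ≤ s ∧ ∀ i ∉ T, obsMap t A C i x = Y i := by
  obtain ⟨Γ, hcard, hΓ⟩ := hx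
  refine ⟨Γᶜ, ?_, fun i hi => hΓ i (by simpa using hi)⟩
  rw [Finset.card_compl, Fintype.card_fin, hcard]
  omega

end SensorSystem

theorem decomposition_bound_overestimates_general
    {n p r s q t : ℕ} (hsq : s ≤ q) (ht : n - 1 ≤ t)
    (A : Matrix (Fin n) (Fin n) ℝ) (C : Matrix (Fin p) (Fin n) ℝ)
    (lam : Fin r → ℝ) (hlam : Function.Injective lam)
    (P : Fin r → Matrix (Fin n) (Fin n) ℝ)
    (hPmem : ∀ j, ∀ x : Fin n → ℝ, (P j).mulVec x ∈ genEig A (lam j))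
    (hPsum : ∀ x : Fin n → ℝ, ∑ j, (P j).mulVec x = x)
    (Y : Fin p → Fin (t + 1) → ℝ) (xtrue : Fin n → ℝ)
    (ΛA : Finset (Fin p)) (hΛA : ΛA.card ≤ s)
    (hdata : ∀ i ∉ ΛA, Y i = obsMap t A C i xtrue)
    (hqobs : ∀ j, q + 1 ≤ {i : Fin p | eigObs A C (lam j) i}.ncard) :
    (∀ j, (Xset t A C lam Y s q j).Finite ∧ (Xset t A C lam Y s q j).Nonempty) ∧
    (∀ x : Fin n → ℝ, plausible t A C s Y x →
      ∀ j, (P j).mulVec x ∈ Xset t A C lam Y s q j) ∧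
    (∀ κ : Fin n → ℝ, ∀ x : Fin n → ℝ, plausible t A C s Y x →
      κ ⬝ᵥ x ≤ ∑ j, sSup ((fun xj => κ ⬝ᵥ xj) '' Xset t A C lam Y s q j)) := by
  have hplaus (x : Fin n → ℝ) (hx : plausible t A C s Y x) (j : Fin r) :
      P j *ᵥ x ∈ Xset t A C lam Y s q j :=
    let ⟨_, hT, hxT⟩ := hx.exists_card_le
    mulVec_mem_Xset hPmem hPsum (hqobs j) hT hxT
  refine ⟨fun j => ⟨Xset_finite hsq ht hlam, _,
    mulVec_mem_Xset hPmem hPsum (hqobs j) hΛA fun i hi => (hdata i hi).symm⟩, hplaus,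
    fun κ x hx => ?_⟩
  calc κ ⬝ᵥ x = ∑ j, κ ⬝ᵥ (P j *ᵥ x) := by rw [← dotProduct_sum, hPsum]
    _ ≤ _ := Finset.sum_le_sum fun j _ =>
      le_csSup ((Xset_finite hsq ht hlam).image _).bddAbove ⟨_, hplaus x hx j, rfl⟩

/-- Proposition 2: the per-subspace candidate sets `X_j` are nonempty
and finite, they contain the projections of every plausible state, and the sum of
per-subspace maxima upper-bounds any linear functional over the plausible states. -/
theorem decomposition_bound_overestimates
    {n p r s q t : ℕ} (hsp : s ≤ p) (hsq : s ≤ q) (hq2s : q ≤ 2 * s) (ht : n - 1 ≤ t)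
    (A : Matrix (Fin n) (Fin n) ℝ) (C : Matrix (Fin p) (Fin n) ℝ)
    (lam : Fin r → ℝ) (hlam : Function.Injective lam)
    (heig : ∀ j, ∃ w : Fin n → ℝ, w ≠ 0 ∧ A.mulVec w = lam j • w)
    (P : Fin r → Matrix (Fin n) (Fin n) ℝ)
    (hPmem : ∀ j, ∀ x : Fin n → ℝ, (P j).mulVec x ∈ genEig A (lam j))
    (hPsum : ∀ x : Fin n → ℝ, ∑ j, (P j).mulVec x = x)
    (Y : Fin p → Fin (t + 1) → ℝ) (xtrue : Fin n → ℝ)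
    (ΛA : Finset (Fin p)) (hΛA : ΛA.card ≤ s)
    (hdata : ∀ i ∉ ΛA, Y i = obsMap t A C i xtrue)
    (hqobs : ∀ j, q + 1 ≤ {i : Fin p | eigObs A C (lam j) i}.ncard) :
    (∀ j, (Xset t A C lam Y s q j).Finite ∧ (Xset t A C lam Y s q j).Nonempty) ∧
    (∀ x : Fin n → ℝ, plausible t A C s Y x →
      ∀ j, (P j).mulVec x ∈ Xset t A C lam Y s q j) ∧
    (∀ κ : Fin n → ℝ, ∀ x : Fin n → ℝ, plausible t A C s Y x →
      κ ⬝ᵥ x ≤ ∑ j, sSup ((fun xj => κ ⬝ᵥ xj) '' Xset t A C lam Y s q j)) :=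
  decomposition_bound_overestimates_general hsq ht A C lam hlam P hPmem hPsum Y xtrue ΛA hΛA hdata
    hqobs
end
end
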